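/- arXiv:1805.03041 — 5 statements merged into one kernel-verified Lean document; each statement's English description precedes it below -/
import Mathlib

section
/- Let p : (E,κ) → (B,λ) be a (κ,λ)-continuous surjection between digital images with the unique path lifting property. If e, e' ∈ E are κ-adjacent, then p(e) ≠ p(e'). (Proposition 3.4(i)) -/
open Set

/-- 2-adjacency on `ℤ` (the `l₁`-adjacency on `ℤ`): `x` and `y` are distinct with `|x - y| = 1`. -/
def adj2 (x y : ℤ) : Prop := |x - y| = 1

/-- 8-adjacency on `ℤ²` (the `l₂`-adjacency on `ℤ²`). -/
def adj8 (p q : ℤ × ℤ) : Prop := p ≠ q ∧ |p.1 - q.1| ≤ 1 ∧ |p.2 - q.2| ≤ 1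

/-- 26-adjacency on `ℤ³` (the `l₃`-adjacency on `ℤ³`). -/
def adj26 (p q : ℤ × ℤ × ℤ) : Prop :=
  p ≠ q ∧ |p.1 - q.1| ≤ 1 ∧ |p.2.1 - q.2.1| ≤ 1 ∧ |p.2.2 - q.2.2| ≤ 1

/-- An adjacency relation (as any `l_u`-adjacency is) is symmetric and irreflexive. -/
def IsAdjacency {A : Type*} (κ : A → A → Prop) : Prop := Symmetric κ ∧ Irreflexive κ

/-- `f` is `(κ,λ)`-continuous on `X`: κ-adjacent points are mapped to equal or λ-adjacent
points. -/
def DigContOn {A B : Type*} (f : A → B) (X : Set A)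
    (κ : A → A → Prop) (lam : B → B → Prop) : Prop :=
  ∀ x₀ ∈ X, ∀ x₁ ∈ X, κ x₀ x₁ → f x₀ = f x₁ ∨ lam (f x₀) (f x₁)

/-- `f : [0,m]_ℤ → X` is a digital `κ`-path of length `m` in `X`,
i.e. a `(2,κ)`-continuous map on `[0,m]_ℤ` with values in `X`. -/
def IsDigPath {A : Type*} (X : Set A) (κ : A → A → Prop) (m : ℕ) (f : ℤ → A) : Prop :=
  (∀ i ∈ Icc (0 : ℤ) (m : ℤ), f i ∈ X) ∧
  ∀ i ∈ Icc (0 : ℤ) (m : ℤ), ∀ j ∈ Icc (0 : ℤ) (m : ℤ),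
    adj2 i j → f i = f j ∨ κ (f i) (f j)

/-- There is a digital `κ`-path of length `m` in `X` from `x` to `y`. -/
def ReachIn {A : Type*} (X : Set A) (κ : A → A → Prop) (x y : A) (m : ℕ) : Prop :=
  ∃ f : ℤ → A, IsDigPath X κ m f ∧ f 0 = x ∧ f (m : ℤ) = y

/-- `X` is `κ`-connected: every two of its points are joined by a `κ`-path in `X`. -/
def DigConnected {A : Type*} (X : Set A) (κ : A → A → Prop) : Prop :=
  ∀ x ∈ X, ∀ y ∈ X, ∃ m : ℕ, ReachIn X κ x y m

/-- The `κ`-neighborhood `N_κ(e₀, ε)` of `e₀` in `X` with radius `ε`: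
points of `X` whose shortest `κ`-path distance from `e₀` is at most `ε`, together with `e₀`. -/
def Nbhd {A : Type*} (X : Set A) (κ : A → A → Prop) (e₀ : A) (ε : ℕ) : Set A :=
  {e ∈ X | ∃ m : ℕ, m ≤ ε ∧ ReachIn X κ e₀ e m} ∪ {e₀}

/-- The restriction of `f` to `X` is a `(κ,λ)`-isomorphism onto `Y`: a `(κ,λ)`-continuous
bijection of `X` onto `Y` whose inverse is `(λ,κ)`-continuous. -/
def IsDigIsoOn {A B : Type*} (f : A → B) (X : Set A) (Y : Set B)
    (κ : A → A → Prop) (lam : B → B → Prop) : Prop :=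
  MapsTo f X Y ∧ InjOn f X ∧ SurjOn f X Y ∧ DigContOn f X κ lam ∧
  ∀ x₀ ∈ X, ∀ x₁ ∈ X, lam (f x₀) (f x₁) → x₀ = x₁ ∨ κ x₀ x₁

/-- `p` is a radius-`n` digital `(κ,λ)`-covering map of `E` onto `Bs`
(`n = 1` gives the usual digital `(κ,λ)`-covering map): a `(κ,λ)`-continuous surjection
such that for each `b ∈ Bs` there is a set `F` of points of the fiber over `b` whose radius-`n`
neighborhoods are pairwise disjoint, partition `p⁻¹(N_λ(b,n))`, and are each mapped
isomorphically onto `N_λ(b,n)` by `p`. -/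
def IsRadiusCovering {A B : Type*} (p : A → B) (E : Set A) (Bs : Set B)
    (κ : A → A → Prop) (lam : B → B → Prop) (n : ℕ) : Prop :=
  MapsTo p E Bs ∧ SurjOn p E Bs ∧ DigContOn p E κ lam ∧
  ∀ b ∈ Bs, ∃ F : Set A, F ⊆ {e ∈ E | p e = b} ∧
    (E ∩ p ⁻¹' (Nbhd Bs lam b n) = ⋃ e ∈ F, Nbhd E κ e n) ∧
    F.Pairwise (fun e e' => Disjoint (Nbhd E κ e n) (Nbhd E κ e' n)) ∧
    ∀ e ∈ F, IsDigIsoOn p (Nbhd E κ e n) (Nbhd Bs lam b n) κ lam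

/-- `p` is a radius-`n` local `(κ,λ)`-isomorphism (`n = 1` gives the usual local
`(κ,λ)`-isomorphism): for every `e ∈ E` the restriction of `p` to `N_κ(e,n)` is a
`(κ,λ)`-isomorphism onto `N_λ(p e, n)`. -/
def IsLocalIso {A B : Type*} (p : A → B) (E : Set A) (Bs : Set B)
    (κ : A → A → Prop) (lam : B → B → Prop) (n : ℕ) : Prop :=
  ∀ e ∈ E, IsDigIsoOn p (Nbhd E κ e n) (Nbhd Bs lam (p e) n) κ lam

/-- `p` has the digital path lifting property: every `λ`-path `a` in `Bs` and every point
`e ∈ E` of the fiber over `a 0` admit a lifting of `a` beginning at `e`. -/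
def PathLiftingProp {A B : Type*} (p : A → B) (E : Set A) (Bs : Set B)
    (κ : A → A → Prop) (lam : B → B → Prop) : Prop :=
  ∀ (m : ℕ) (a : ℤ → B), IsDigPath Bs lam m a → ∀ e ∈ E, p e = a 0 →
    ∃ g : ℤ → A, IsDigPath E κ m g ∧ (∀ i ∈ Icc (0 : ℤ) (m : ℤ), p (g i) = a i) ∧ g 0 = e

/-- `p` has the uniqueness of digital path lifts property: two `κ`-paths in `E` with the
same projection and the same starting point coincide (on their domain `[0,m]_ℤ`). -/
def UniqLiftsProp {A B : Type*} (p : A → B) (E : Set A) (κ : A → A → Prop) : Prop :=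
  ∀ (m : ℕ) (a b : ℤ → A), IsDigPath E κ m a → IsDigPath E κ m b →
    (∀ i ∈ Icc (0 : ℤ) (m : ℤ), p (a i) = p (b i)) → a 0 = b 0 →
    EqOn a b (Icc (0 : ℤ) (m : ℤ))

/-- `p` has the unique path lifting property (u.p.l.): both the path lifting property and
the uniqueness of path lifts property. -/
def UPL {A B : Type*} (p : A → B) (E : Set A) (Bs : Set B)
    (κ : A → A → Prop) (lam : B → B → Prop) : Prop :=
  PathLiftingProp p E Bs κ lam ∧ UniqLiftsProp p E κ

/-- `e` is a conciliator point for `p`: there are `e', e'' ∈ N_κ(e,1)` which are not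
`κ`-adjacent but whose images are `λ`-adjacent. -/
def IsConciliator {A B : Type*} (p : A → B) (E : Set A)
    (κ : A → A → Prop) (lam : B → B → Prop) (e : A) : Prop :=
  ∃ e' ∈ Nbhd E κ e 1, ∃ e'' ∈ Nbhd E κ e 1, ¬ κ e' e'' ∧ lam (p e') (p e'')

/-- `f : [0,m]_ℤ → X` is a simple `κ`-loop of length `m` in `X`: a closed `κ`-path such that
`f 0, …, f (m-1)` are pairwise distinct and `f i`, `f j` are `κ`-adjacent iff
`j = i ± 1 (mod m)`. -/
def IsSimpleLoop {A : Type*} (X : Set A) (κ : A → A → Prop) (m : ℕ) (f : ℤ → A) : Prop :=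
  IsDigPath X κ m f ∧ f 0 = f (m : ℤ) ∧
  (∀ i ∈ Ico (0 : ℤ) (m : ℤ), ∀ j ∈ Ico (0 : ℤ) (m : ℤ), f i = f j → i = j) ∧
  ∀ i ∈ Ico (0 : ℤ) (m : ℤ), ∀ j ∈ Ico (0 : ℤ) (m : ℤ),
    (κ (f i) (f j) ↔ (j % (m : ℤ) = (i + 1) % (m : ℤ) ∨ j % (m : ℤ) = (i - 1) % (m : ℤ)))

/-! If `p e = p e'`, the constant path at `e` and the one-step path `e, e'` are two lifts from `e`
of the constant path at `p e`, so uniqueness of lifts forces `e' = e`, against irreflexivity. -/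

section Paths

variable {A : Type*} {X : Set A} {κ : A → A → Prop}

theorem isDigPath_const (m : ℕ) {x : A} (hx : x ∈ X) : IsDigPath X κ m (fun _ => x) :=
  ⟨fun _ _ => hx, fun _ _ _ _ _ => Or.inl rfl⟩

theorem isDigPath_step {x y : A} (hx : x ∈ X) (hy : y ∈ X) (hxy : κ x y) (hyx : κ y x) :
    IsDigPath X κ 1 (fun i => if i ≤ 0 then x else y) := by
  refine ⟨fun i _ => ?_, fun i _ j _ _ => ?_⟩ <;> dsimp only
  · split_ifs <;> assumption
  · split_ifs
    exacts [Or.inl rfl, Or.inr hxy, Or.inr hyx, Or.inl rfl]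

end Paths

theorem UniqLiftsProp.apply_ne_of_adj {A B : Type*} {p : A → B} {E : Set A} {κ : A → A → Prop}
    (hp : UniqLiftsProp p E κ) (hκ : IsAdjacency κ)
    {e e' : A} (he : e ∈ E) (he' : e' ∈ E) (hadj : κ e e') : p e ≠ p e' := by
  intro hpe
  have hlifts : EqOn (fun i => if i ≤ 0 then e else e') (fun _ => e) (Icc (0 : ℤ) 1) :=
    hp 1 _ _ (isDigPath_step he he' hadj (hκ.1 hadj)) (isDigPath_const 1 he)
      (fun i _ => by split_ifs <;> simp [hpe]) (by simp)
  have he'e : e' = e := by simpa using hlifts (show (1 : ℤ) ∈ Icc 0 1 by simp)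
  exact hκ.2 e (he'e ▸ hadj)

theorem prop_3_4_i_general {N M : ℕ} (E : Set (Fin N → ℤ)) (Bs : Set (Fin M → ℤ))
    (κ : (Fin N → ℤ) → (Fin N → ℤ) → Prop) (lam : (Fin M → ℤ) → (Fin M → ℤ) → Prop)
    (hκ : IsAdjacency κ)
    (p : (Fin N → ℤ) → (Fin M → ℤ))
    (hupl : UPL p E Bs κ lam)
    (e e' : Fin N → ℤ) (he : e ∈ E) (he' : e' ∈ E) (hadj : κ e e') :
    p e ≠ p e' :=
  hupl.2.apply_ne_of_adj hκ he he' hadj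

/-- Proposition 3.4(i): if `p` is a `(κ,λ)`-continuous surjection between digital images
with the unique path lifting property and `e`, `e'` are `κ`-adjacent, then `p e ≠ p e'`. -/
theorem prop_3_4_i {N M : ℕ} (E : Set (Fin N → ℤ)) (Bs : Set (Fin M → ℤ))
    (κ : (Fin N → ℤ) → (Fin N → ℤ) → Prop) (lam : (Fin M → ℤ) → (Fin M → ℤ) → Prop)
    (hκ : IsAdjacency κ) (hlam : IsAdjacency lam)
    (p : (Fin N → ℤ) → (Fin M → ℤ))
    (hmaps : Set.MapsTo p E Bs) (hsurj : Set.SurjOn p E Bs)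
    (hcont : DigContOn p E κ lam) (hupl : UPL p E Bs κ lam)
    (e e' : Fin N → ℤ) (he : e ∈ E) (he' : e' ∈ E) (hadj : κ e e') :
    p e ≠ p e' :=
  prop_3_4_i_general E Bs κ lam hκ p hupl e e' he he' hadj
end

section
/- Let p : (E,κ) → (B,λ) be a (κ,λ)-continuous surjection between digital images with the unique path lifting property. If e, e', e'' ∈ E are such that e is κ-adjacent to e', e is κ-adjacent to e'', and e' ≠ e'', then p(e') ≠ p(e''). (Proposition 3.4(ii)) -/
open Set

def edgePath {A : Type*} (x y : A) : ℤ → A := fun i => if i ≤ 0 then x else y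

@[simp]
theorem edgePath_zero {A : Type*} (x y : A) : edgePath x y 0 = x := by
  simp [edgePath]

@[simp]
theorem edgePath_one {A : Type*} (x y : A) : edgePath x y 1 = y := by
  simp [edgePath]

theorem isDigPath_edgePath {A : Type*} {X : Set A} {κ : A → A → Prop} {x y : A}
    (hx : x ∈ X) (hy : y ∈ X) (hxy : κ x y) (hyx : κ y x) :
    IsDigPath X κ 1 (edgePath x y) := by
  have hIcc : ∀ i ∈ Icc (0 : ℤ) ((1 : ℕ) : ℤ), i = 0 ∨ i = 1 := by
    rintro i ⟨h0, h1⟩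
    push_cast at h1
    omega
  refine ⟨fun i hi => ?_, fun i hi j hj _ => ?_⟩
  · rcases hIcc i hi with rfl | rfl <;> simpa
  · rcases hIcc i hi with rfl | rfl <;> rcases hIcc j hj with rfl | rfl <;> simp [hxy, hyx]

theorem UniqLiftsProp.eq_of_adj_of_map_eq {A B : Type*} {p : A → B} {E : Set A}
    {κ : A → A → Prop} (h : UniqLiftsProp p E κ) {e e' e'' : A}
    (he : e ∈ E) (he' : e' ∈ E) (he'' : e'' ∈ E)
    (hee' : κ e e') (he'e : κ e' e) (hee'' : κ e e'') (he''e : κ e'' e) (hp : p e' = p e'') :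
    e' = e'' := by
  have hproj : ∀ i ∈ Icc (0 : ℤ) ((1 : ℕ) : ℤ), p (edgePath e e' i) = p (edgePath e e'' i) := by
    intro i _
    by_cases hi : i ≤ 0 <;> simp [edgePath, hi, hp]
  simpa using h 1 _ _ (isDigPath_edgePath he he' hee' he'e)
    (isDigPath_edgePath he he'' hee'' he''e)
    hproj (by simp) (show ((1 : ℕ) : ℤ) ∈ Icc (0 : ℤ) ((1 : ℕ) : ℤ) by simp)

theorem prop_3_4_ii_general {N M : ℕ} (E : Set (Fin N → ℤ)) (Bs : Set (Fin M → ℤ))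
    (κ : (Fin N → ℤ) → (Fin N → ℤ) → Prop) (lam : (Fin M → ℤ) → (Fin M → ℤ) → Prop)
    (hκ : IsAdjacency κ)
    (p : (Fin N → ℤ) → (Fin M → ℤ))
    (hupl : UPL p E Bs κ lam)
    (e e' e'' : Fin N → ℤ) (he : e ∈ E) (he' : e' ∈ E) (he'' : e'' ∈ E)
    (hadj' : κ e e') (hadj'' : κ e e'') (hne : e' ≠ e'') :
    p e' ≠ p e'' := by
  exact fun hpe => hne (hupl.2.eq_of_adj_of_map_eq he he' he'' hadj' (hκ.1 hadj') hadj''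
    (hκ.1 hadj'') hpe)

/-- Proposition 3.4(ii): if `p` is a `(κ,λ)`-continuous surjection between digital images
with the unique path lifting property, `e` is `κ`-adjacent to both `e'` and `e''`, and
`e' ≠ e''`, then `p e' ≠ p e''`. -/
theorem prop_3_4_ii {N M : ℕ} (E : Set (Fin N → ℤ)) (Bs : Set (Fin M → ℤ))
    (κ : (Fin N → ℤ) → (Fin N → ℤ) → Prop) (lam : (Fin M → ℤ) → (Fin M → ℤ) → Prop)
    (hκ : IsAdjacency κ) (hlam : IsAdjacency lam)
    (p : (Fin N → ℤ) → (Fin M → ℤ))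
    (hmaps : Set.MapsTo p E Bs) (hsurj : Set.SurjOn p E Bs)
    (hcont : DigContOn p E κ lam) (hupl : UPL p E Bs κ lam)
    (e e' e'' : Fin N → ℤ) (he : e ∈ E) (he' : e' ∈ E) (he'' : e'' ∈ E)
    (hadj' : κ e e') (hadj'' : κ e e'') (hne : e' ≠ e'') :
    p e' ≠ p e'' :=
  prop_3_4_ii_general E Bs κ lam hκ p hupl e e' e'' he he' he'' hadj' hadj'' hne
end

section
/- Let p : (E,κ) → (B,λ) be a (κ,λ)-continuous surjection between digital images with the unique path lifting property. If e, e' ∈ E are such that p(e) and p(e') are λ-adjacent, then there is a unique element e'' ∈ p⁻¹(p(e')) such that e is κ-adjacent to e''. (Proposition 3.4(iii)) -/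
open Set

/-!
The edge from `p e` to `p e'` is a `λ`-path of length one. Its lift starting at `e` cannot stay at
`e`, since `λ` is irreflexive, so it ends at a `κ`-neighbour of `e` in the fibre over `p e'`.
Two such neighbours of `e` give two `κ`-paths of length one with the same start and the same
projection, which coincide by uniqueness of lifts.
-/

def stepPath {A : Type*} (x y : A) : ℤ → A := fun i => if i = 0 then x else y

section StepPath

variable {A B : Type*} {X : Set A} {κ : A → A → Prop} {lam : B → B → Prop}

lemma eq_zero_or_eq_one_of_mem_Icc {i : ℤ} (hi : i ∈ Icc (0 : ℤ) ((1 : ℕ) : ℤ)) :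
    i = 0 ∨ i = 1 := by
  simp only [Nat.cast_one, mem_Icc] at hi
  omega

@[simp] lemma stepPath_zero (x y : A) : stepPath x y 0 = x := rfl

@[simp] lemma stepPath_one (x y : A) : stepPath x y 1 = y := rfl

lemma isDigPath_stepPath (hκ : Symmetric κ) {x y : A} (hx : x ∈ X) (hy : y ∈ X)
    (hxy : x = y ∨ κ x y) : IsDigPath X κ 1 (stepPath x y) := by
  refine ⟨fun i hi => ?_, fun i hi j hj hij => ?_⟩
  · rcases eq_zero_or_eq_one_of_mem_Icc hi with rfl | rfl <;> simpa
  · rcases eq_zero_or_eq_one_of_mem_Icc hi with rfl | rfl <;>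
      rcases eq_zero_or_eq_one_of_mem_Icc hj with rfl | rfl
    · simp [adj2] at hij
    · simpa using hxy
    · simpa using hxy.imp Eq.symm (@hκ x y)
    · simp [adj2] at hij

lemma PathLiftingProp.exists_adjacent_lift {p : A → B} {E : Set A} {Bs : Set B}
    (hlift : PathLiftingProp p E Bs κ lam) (hlam : IsAdjacency lam) {e : A} (he : e ∈ E)
    (hpe : p e ∈ Bs) {b : B} (hb : b ∈ Bs) (hadj : lam (p e) b) :
    ∃ e'' ∈ E, p e'' = b ∧ κ e e'' := by
  have h0 : (0 : ℤ) ∈ Icc (0 : ℤ) ((1 : ℕ) : ℤ) := by simp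
  have h1 : (1 : ℤ) ∈ Icc (0 : ℤ) ((1 : ℕ) : ℤ) := by simp
  obtain ⟨g, hg, hpg, hg0⟩ :=
    hlift 1 (stepPath (p e) b) (isDigPath_stepPath hlam.1 hpe hb (Or.inr hadj)) e he rfl
  have hpg1 : p (g 1) = b := hpg 1 h1
  refine ⟨g 1, hg.1 1 h1, hpg1, ?_⟩
  rcases hg.2 0 h0 1 h1 (by simp [adj2]) with hstay | hmove
  · rw [← hstay, hg0] at hpg1
    exact absurd (hpg1 ▸ hadj) (hlam.2 b)
  · rwa [hg0] at hmove

lemma UniqLiftsProp.eq_of_adjacent {p : A → B} {E : Set A} (huniq : UniqLiftsProp p E κ)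
    (hκ : Symmetric κ) {e x y : A} (he : e ∈ E) (hx : x ∈ E) (hy : y ∈ E)
    (hex : κ e x) (hey : κ e y) (hpxy : p x = p y) : x = y := by
  have hproj : ∀ i ∈ Icc (0 : ℤ) ((1 : ℕ) : ℤ), p (stepPath e x i) = p (stepPath e y i) := by
    intro i hi
    rcases eq_zero_or_eq_one_of_mem_Icc hi with rfl | rfl <;> simp [hpxy]
  simpa using huniq 1 _ _ (isDigPath_stepPath hκ he hx (Or.inr hex))
    (isDigPath_stepPath hκ he hy (Or.inr hey)) hproj rfl (by simp : (1 : ℤ) ∈ _)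

end StepPath

theorem prop_3_4_iii_general {N M : ℕ} (E : Set (Fin N → ℤ)) (Bs : Set (Fin M → ℤ))
    (κ : (Fin N → ℤ) → (Fin N → ℤ) → Prop) (lam : (Fin M → ℤ) → (Fin M → ℤ) → Prop)
    (hκ : IsAdjacency κ) (hlam : IsAdjacency lam)
    (p : (Fin N → ℤ) → (Fin M → ℤ))
    (hmaps : Set.MapsTo p E Bs)
    (hupl : UPL p E Bs κ lam)
    (e e' : Fin N → ℤ) (he : e ∈ E) (he' : e' ∈ E) (hladj : lam (p e) (p e')) :
    ∃! e'' : Fin N → ℤ, e'' ∈ E ∧ p e'' = p e' ∧ κ e e'' := by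
  obtain ⟨hlift, huniq⟩ := hupl
  obtain ⟨e'', he'', hpe'', hadj⟩ :=
    hlift.exists_adjacent_lift hlam he (hmaps he) (hmaps he') hladj
  refine ⟨e'', ⟨he'', hpe'', hadj⟩, ?_⟩
  rintro y ⟨hy, hpy, hey⟩
  exact huniq.eq_of_adjacent hκ.1 he hy he'' hey hadj (hpy.trans hpe''.symm)

/-- Proposition 3.4(iii): if `p` is a `(κ,λ)`-continuous surjection between digital images
with the unique path lifting property and `p e`, `p e'` are `λ`-adjacent, then there is a
unique `e'' ∈ p⁻¹(p e')` with `e` `κ`-adjacent to `e''`. -/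
theorem prop_3_4_iii {N M : ℕ} (E : Set (Fin N → ℤ)) (Bs : Set (Fin M → ℤ))
    (κ : (Fin N → ℤ) → (Fin N → ℤ) → Prop) (lam : (Fin M → ℤ) → (Fin M → ℤ) → Prop)
    (hκ : IsAdjacency κ) (hlam : IsAdjacency lam)
    (p : (Fin N → ℤ) → (Fin M → ℤ))
    (hmaps : Set.MapsTo p E Bs) (hsurj : Set.SurjOn p E Bs)
    (hcont : DigContOn p E κ lam) (hupl : UPL p E Bs κ lam)
    (e e' : Fin N → ℤ) (he : e ∈ E) (he' : e' ∈ E) (hladj : lam (p e) (p e')) :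
    ∃! e'' : Fin N → ℤ, e'' ∈ E ∧ p e'' = p e' ∧ κ e e'' :=
  prop_3_4_iii_general E Bs κ lam hκ hlam p hmaps hupl e e' he he' hladj
end

section
/- Let (E,κ) and (B,λ) be connected digital images. A (κ,λ)-continuous surjection p : (E,κ) → (B,λ) is a digital (κ,λ)-covering map if and only if it is a local (κ,λ)-isomorphism. (Theorem 4.2) -/
open Set

/-!
The fibre `p⁻¹(b)` itself indexes the sheets over `N_λ(b,n)`. Neighbourhoods are symmetric
(a path can be run backwards), so a point `x` with `p x ∈ N_λ(b,n)` sees `b` in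
`N_λ(p x, n)`; local surjectivity at `x` yields `e ∈ p⁻¹(b)` with `x ∈ N_κ(e,n)`, and local
injectivity at a common point of two sheets identifies their centres. Conversely, a point `e`
lies in some sheet over `p e`, and injectivity on that sheet makes `e` its centre.
-/

section Neighborhood

variable {A : Type*} {X : Set A} {κ : A → A → Prop}

theorem ReachIn.symm {x y : A} {m : ℕ} (h : ReachIn X κ x y m) : ReachIn X κ y x m := by
  obtain ⟨f, ⟨hmem, hadj⟩, hf0, hfm⟩ := h
  have hrev : ∀ i ∈ Icc (0 : ℤ) m, (m : ℤ) - i ∈ Icc (0 : ℤ) m := fun i hi => by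
    simp only [mem_Icc] at hi ⊢; omega
  refine ⟨fun i => f ((m : ℤ) - i), ⟨fun i hi => hmem _ (hrev i hi), ?_⟩,
    by simpa using hfm, by simpa using hf0⟩
  intro i hi j hj hij
  refine hadj _ (hrev i hi) _ (hrev j hj) ?_
  rwa [adj2, sub_sub_sub_cancel_left, abs_sub_comm]

theorem self_mem_nbhd (e : A) (ε : ℕ) : e ∈ Nbhd X κ e ε := Or.inr rfl

theorem nbhd_subset {e : A} {ε : ℕ} (he : e ∈ X) : Nbhd X κ e ε ⊆ X := by
  rintro z (⟨hz, -⟩ | rfl)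
  exacts [hz, he]

theorem mem_nbhd_symm {x e : A} {ε : ℕ} (hx : x ∈ X) (h : e ∈ Nbhd X κ x ε) :
    x ∈ Nbhd X κ e ε := by
  rcases h with ⟨-, m, hm, hr⟩ | rfl
  · exact Or.inl ⟨hx, m, hm, hr.symm⟩
  · exact self_mem_nbhd _ _

end Neighborhood

section Covering

variable {A B : Type*} {p : A → B} {E : Set A} {Bs : Set B}
  {κ : A → A → Prop} {lam : B → B → Prop} {n : ℕ}

theorem IsRadiusCovering.isLocalIso (h : IsRadiusCovering p E Bs κ lam n) :
    IsLocalIso p E Bs κ lam n := by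
  intro e he
  obtain ⟨F, hF, hunion, -, hiso⟩ := h.2.2.2 (p e) (h.1 he)
  have he_mem : e ∈ ⋃ e' ∈ F, Nbhd E κ e' n := hunion ▸ ⟨he, self_mem_nbhd _ _⟩
  obtain ⟨e', he'F, he_sheet⟩ := mem_iUnion₂.mp he_mem
  have hpe' : p e' = p e := (hF he'F).2
  obtain rfl : e = e' := (hiso e' he'F).2.1 he_sheet (self_mem_nbhd _ _) hpe'.symm
  exact hiso e he'F

theorem IsLocalIso.preimage_nbhd_eq_biUnion (hloc : IsLocalIso p E Bs κ lam n) {b : B}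
    (hb : b ∈ Bs) :
    E ∩ p ⁻¹' Nbhd Bs lam b n = ⋃ e ∈ {e ∈ E | p e = b}, Nbhd E κ e n := by
  ext x
  constructor
  · rintro ⟨hx, hpx⟩
    obtain ⟨e, he_near, hpe⟩ := (hloc x hx).2.2.1 (mem_nbhd_symm hb hpx)
    exact mem_biUnion ⟨nbhd_subset hx he_near, hpe⟩ (mem_nbhd_symm hx he_near)
  · intro hx
    obtain ⟨e, ⟨he, rfl⟩, hx_near⟩ := mem_iUnion₂.mp hx
    exact ⟨nbhd_subset he hx_near, (hloc e he).1 hx_near⟩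

theorem IsLocalIso.pairwise_disjoint_nbhd_fiber (hloc : IsLocalIso p E Bs κ lam n) (b : B) :
    {e ∈ E | p e = b}.Pairwise fun e e' => Disjoint (Nbhd E κ e n) (Nbhd E κ e' n) := by
  rintro e ⟨he, hpe⟩ e' ⟨he', hpe'⟩ hne
  refine disjoint_left.mpr fun x hx hx' => hne ?_
  exact (hloc x (nbhd_subset he hx)).2.1 (mem_nbhd_symm he hx) (mem_nbhd_symm he' hx')
    (hpe.trans hpe'.symm)

theorem IsLocalIso.isRadiusCovering (hloc : IsLocalIso p E Bs κ lam n)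
    (hmaps : MapsTo p E Bs) (hsurj : SurjOn p E Bs) (hcont : DigContOn p E κ lam) :
    IsRadiusCovering p E Bs κ lam n := by
  refine ⟨hmaps, hsurj, hcont, fun b hb => ⟨{e ∈ E | p e = b}, Subset.rfl,
    hloc.preimage_nbhd_eq_biUnion hb, hloc.pairwise_disjoint_nbhd_fiber b, ?_⟩⟩
  rintro e ⟨he, rfl⟩
  exact hloc e he

end Covering

theorem thm_4_2_general {N M : ℕ} (E : Set (Fin N → ℤ)) (Bs : Set (Fin M → ℤ))
    (κ : (Fin N → ℤ) → (Fin N → ℤ) → Prop) (lam : (Fin M → ℤ) → (Fin M → ℤ) → Prop)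
    (p : (Fin N → ℤ) → (Fin M → ℤ))
    (hmaps : Set.MapsTo p E Bs) (hsurj : Set.SurjOn p E Bs)
    (hcont : DigContOn p E κ lam) :
    IsRadiusCovering p E Bs κ lam 1 ↔ IsLocalIso p E Bs κ lam 1 :=
  ⟨IsRadiusCovering.isLocalIso, fun hloc => hloc.isRadiusCovering hmaps hsurj hcont⟩

/-- Theorem 4.2: a `(κ,λ)`-continuous surjection between connected digital images is a
digital `(κ,λ)`-covering map if and only if it is a local `(κ,λ)`-isomorphism. -/
theorem thm_4_2 {N M : ℕ} (E : Set (Fin N → ℤ)) (Bs : Set (Fin M → ℤ))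
    (κ : (Fin N → ℤ) → (Fin N → ℤ) → Prop) (lam : (Fin M → ℤ) → (Fin M → ℤ) → Prop)
    (hκ : IsAdjacency κ) (hlam : IsAdjacency lam)
    (hconnE : DigConnected E κ) (hconnB : DigConnected Bs lam)
    (p : (Fin N → ℤ) → (Fin M → ℤ))
    (hmaps : Set.MapsTo p E Bs) (hsurj : Set.SurjOn p E Bs)
    (hcont : DigContOn p E κ lam) :
    IsRadiusCovering p E Bs κ lam 1 ↔ IsLocalIso p E Bs κ lam 1 :=
  thm_4_2_general E Bs κ lam p hmaps hsurj hcont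
end

section
/- Let SC₈^{2,4} = (c_i)_{i∈[0,3]_ℤ} be a simple closed 8-curve with 4 points in ℤ², let ℤ⁺ = {k ∈ ℤ : k ≥ 0} with 2-adjacency, and define h : ℤ⁺ → SC₈^{2,4} by h(i) = c_{i mod 4}. Then h has the uniqueness of digital path lifts property but does not have the digital path lifting property (the 8-path γ : [0,1]_ℤ → SC₈^{2,4} with γ(0) = c₀, γ(1) = c₃ has no lifting beginning at 0 ∈ h⁻¹(c₀)). (Example 3.3) -/
open Set

/-
The projection `i ↦ c (i mod 4)` is injective on any three consecutive integers, and a 2-path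
moves by at most one at each step, so a lift is determined step by step by its projection.
Lifting fails because `ℤ⁺` has no point left of `0`: the only neighbours of `0` in `ℤ⁺` are `0`
and `1`, which project to `c 0` and `c 1`, never to the neighbour `c 3` of `c 0`.
-/

lemma adj2_iff {x y : ℤ} : adj2 x y ↔ x - y = 1 ∨ x - y = -1 :=
  abs_eq zero_le_one

lemma adj2_add_one (x : ℤ) : adj2 x (x + 1) := by
  simp [adj2]

lemma IsDigPath.add_one_mem_Icc {X : Set ℤ} {m : ℕ} {f : ℤ → ℤ} (hf : IsDigPath X adj2 m f)
    {k : ℤ} (hk : 0 ≤ k) (hkm : k + 1 ≤ m) : f (k + 1) ∈ Icc (f k - 1) (f k + 1) := by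
  have hstep := hf.2 k ⟨hk, by omega⟩ (k + 1) ⟨by omega, hkm⟩ (adj2_add_one k)
  rw [adj2_iff] at hstep
  constructor <;> omega

lemma isDigPath_ite_of_adj {A : Type*} {X : Set A} {κ : A → A → Prop} {x y : A}
    (hx : x ∈ X) (hy : y ∈ X) (hxy : κ x y) (hyx : κ y x) :
    IsDigPath X κ 1 (fun i => if i = 0 then x else y) := by
  refine ⟨fun i _ => by dsimp only; split_ifs <;> assumption, fun i hi j hj hij => Or.inr ?_⟩
  simp only [Nat.cast_one, mem_Icc] at hi hj
  rw [adj2_iff] at hij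
  obtain ⟨rfl, rfl⟩ | ⟨rfl, rfl⟩ : i = 0 ∧ j = 1 ∨ i = 1 ∧ j = 0 := by omega
  · simpa using hxy
  · simpa using hyx

theorem uniqLiftsProp_of_injOn {B : Type*} (p : ℤ → B) (E : Set ℤ)
    (hp : ∀ x, InjOn p (Icc (x - 1) (x + 1))) : UniqLiftsProp p E adj2 := by
  intro m a b ha hb hab h0 i hi
  induction i, hi.1 using Int.leInduction with
  | base => exact h0
  | succ k hk ih =>
    have hkm : k + 1 ≤ m := hi.2
    have hak := ha.add_one_mem_Icc hk hkm
    have hbk := hb.add_one_mem_Icc hk hkm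
    rw [ih ⟨hk, by omega⟩] at hak
    exact hp (b k) hak hbk (hab (k + 1) ⟨by omega, hkm⟩)

lemma injOn_comp_emod_four {B : Type*} {c : ℤ → B} (hc : InjOn c (Icc 0 3)) (x : ℤ) :
    InjOn (fun i => c (i % 4)) (Icc (x - 1) (x + 1)) := by
  intro u hu v hv huv
  have : u % 4 = v % 4 := hc ⟨by omega, by omega⟩ ⟨by omega, by omega⟩ huv
  simp only [mem_Icc] at hu hv
  omega

/-- Example 3.3: for a simple closed 8-curve `SC₈^{2,4} = (c_i)_{i ∈ [0,3]_ℤ}` in `ℤ²` and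
`h : ℤ⁺ → SC₈^{2,4}` given by `h i = c (i mod 4)`, the map `h` has the uniqueness of digital
path lifts property but not the digital path lifting property: the 8-path `γ` with
`γ 0 = c 0`, `γ 1 = c 3` has no lifting beginning at `0 ∈ h⁻¹(c 0)`. -/
theorem example_3_3 (c : ℤ → ℤ × ℤ)
    (hc_inj : ∀ i ∈ Set.Icc (0 : ℤ) 3, ∀ j ∈ Set.Icc (0 : ℤ) 3, c i = c j → i = j)
    (hc_adj : ∀ i ∈ Set.Icc (0 : ℤ) 3, ∀ j ∈ Set.Icc (0 : ℤ) 3,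
      (adj8 (c i) (c j) ↔ (j % 4 = (i + 1) % 4 ∨ j % 4 = (i - 1) % 4)))
    (h : ℤ → ℤ × ℤ) (hh : ∀ i : ℤ, h i = c (i % 4)) :
    UniqLiftsProp h {k : ℤ | 0 ≤ k} adj2 ∧
    ¬ PathLiftingProp h {k : ℤ | 0 ≤ k} (c '' Set.Icc (0 : ℤ) 3) adj2 adj8 ∧
    (∃ γ : ℤ → ℤ × ℤ, IsDigPath (c '' Set.Icc (0 : ℤ) 3) adj8 1 γ ∧
      γ 0 = c 0 ∧ γ 1 = c 3 ∧
      ¬ ∃ g : ℤ → ℤ, IsDigPath {k : ℤ | 0 ≤ k} adj2 1 g ∧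
        (∀ i ∈ Set.Icc (0 : ℤ) 1, h (g i) = γ i) ∧ g 0 = 0) := by
  obtain rfl : h = fun i => c (i % 4) := funext hh
  have hc : InjOn c (Icc 0 3) := fun i hi j hj => hc_inj i hi j hj
  set γ : ℤ → ℤ × ℤ := fun i => if i = 0 then c 0 else c 3
  have hγ : IsDigPath (c '' Icc 0 3) adj8 1 γ :=
    isDigPath_ite_of_adj (mem_image_of_mem c (by norm_num)) (mem_image_of_mem c (by norm_num))
      ((hc_adj 0 (by norm_num) 3 (by norm_num)).2 (by decide))
      ((hc_adj 3 (by norm_num) 0 (by norm_num)).2 (by decide))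
  have hno_lift : ¬ ∃ g : ℤ → ℤ, IsDigPath {k : ℤ | 0 ≤ k} adj2 1 g ∧
      (∀ i ∈ Icc (0 : ℤ) 1, c (g i % 4) = γ i) ∧ g 0 = 0 := by
    rintro ⟨g, hg, hlift, hg0⟩
    have hg1 := hg.add_one_mem_Icc le_rfl (by norm_num)
    have hpos : 0 ≤ g 1 := hg.1 1 (by norm_num)
    have hc3 : c (g 1 % 4) = c 3 := hlift 1 (by norm_num)
    have : g 1 % 4 = 3 := hc ⟨Int.emod_nonneg _ (by norm_num), by omega⟩ (by norm_num) hc3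
    simp only [zero_add, hg0, mem_Icc] at hg1
    omega
  refine ⟨uniqLiftsProp_of_injOn _ _ (injOn_comp_emod_four hc), fun hP => hno_lift ?_,
    γ, hγ, rfl, rfl, hno_lift⟩
  simpa using hP 1 γ hγ 0 (le_refl (0 : ℤ)) rfl
end
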